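/- Every countable sharp domain is a Dedekind domain. -/

import Mathlib

/-- A domain `R` is *sharp* if whenever `I ⊇ A*B` with `I, A, B` nonzero ideals,
there exist ideals `A' ⊇ A` and `B' ⊇ B` such that `I = A'*B'`. -/
def IsSharpDomain (R : Type*) [CommRing R] : Prop :=
  ∀ I A B : Ideal R, I ≠ ⊥ → A ≠ ⊥ → B ≠ ⊥ → A * B ≤ I →
    ∃ A' B' : Ideal R, A ≤ A' ∧ B ≤ B' ∧ I = A' * B'

/-!
Sharpness, applied to `(a) ⊇ I · aI⁻¹` for `0 ≠ a ∈ I`, makes `I⁻¹` invertible for every nonzero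
ideal `I`. Applied to `U + V² ⊇ (U + V) V`, it shows that if `U`, `V` are invertible and
`(U + V)⁻¹ = R`, then `U + V` is a finitely generated idempotent ideal, hence `R`; since
`(U + V)(U + V)⁻¹` is such a sum, sums of invertible ideals are invertible.

Now let `I ≠ 0` and `J = I I⁻¹`, so that `J⁻¹ = R`. If `J ≠ R`, then `J² ⊄ F` for every invertible
`F ⊆ J`, so adjoining two elements of `J` at a time yields an increasing chain of invertible ideals
`D_k ⊆ J` with `D_{k+1}² ⊄ D_k`. For `S ⊆ ℕ` the infinite products `∏_{i ∈ S} D_i D_{i+1}⁻¹` are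
divisorial, hence invertible and finitely generated, and pairwise distinct: uncountably many
finitely generated ideals over a countable ring, which is absurd. So `I` is invertible.
-/

open scoped nonZeroDivisors

theorem IsUnit.mul_le_mul_iff_left {M : Type*} [Monoid M] [Preorder M] [MulLeftMono M]
    {u a b : M} (hu : IsUnit u) : u * a ≤ u * b ↔ a ≤ b := by
  refine ⟨fun h => ?_, fun h => by gcongr⟩
  simpa [← mul_assoc] using _root_.mul_le_mul_right h ↑hu.unit⁻¹

theorem IsLocalization.countable {R S : Type*} [CommRing R] [CommRing S] [Algebra R S]
    (M : Submonoid R) [IsLocalization M S] [Countable R] : Countable S :=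
  (IsLocalization.mk'_surjective M).countable

theorem Submodule.countable_setOf_fg (R M : Type*) [Semiring R] [AddCommMonoid M] [Module R M]
    [Countable M] : {p : Submodule R M | p.FG}.Countable :=
  (Set.countable_range fun s : Finset M => span R (s : Set M)).mono fun _ h => h

namespace FractionalIdeal

theorem add_inf_assoc_of_le {R P : Type*} [CommRing R] {S : Submonoid R} [CommRing P]
    [Algebra R P] {I W : FractionalIdeal S P} (J : FractionalIdeal S P) (hI : I ≤ W) :
    (I + J) ⊓ W = I + J ⊓ W :=
  coeToSubmodule_injective (sup_inf_assoc_of_le _ hI)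

protected theorem add_le {R P : Type*} [CommRing R] {S : Submonoid R} [CommRing P] [Algebra R P]
    {I J W : FractionalIdeal S P} (hI : I ≤ W) (hJ : J ≤ W) : I + J ≤ W := by
  rw [← sup_eq_add]; exact sup_le hI hJ

variable {R K : Type*} [CommRing R] [IsDomain R] [Field K] [Algebra R K] [IsFractionRing R K]
  {I J U V W : FractionalIdeal R⁰ K}

theorem le_inv_iff_mul_le (hJ : J ≠ 0) : I ≤ J⁻¹ ↔ I * J ≤ 1 :=
  le_div_iff_mul_le hJ

protected theorem mul_inv_le_one (I : FractionalIdeal R⁰ K) : I * I⁻¹ ≤ 1 :=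
  mul_one_div_le_one

protected theorem inv_ne_zero (hI : I ≠ 0) : I⁻¹ ≠ 0 := fun h =>
  (bot_lt_mul_inv hI).ne' (by rw [h, mul_zero]; rfl)

theorem le_inv_inv (hI : I ≠ 0) : I ≤ I⁻¹⁻¹ :=
  (le_inv_iff_mul_le (FractionalIdeal.inv_ne_zero hI)).mpr (FractionalIdeal.mul_inv_le_one I)

protected theorem one_le_inv (hI1 : I ≤ 1) (hI0 : I ≠ 0) : 1 ≤ I⁻¹ :=
  (le_inv_iff_mul_le hI0).mpr (by rwa [one_mul])

theorem mul_inv_cancel_of_isUnit (hI : IsUnit I) : I * I⁻¹ = 1 :=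
  (mul_inv_cancel_iff_isUnit K).mpr hI

theorem inv_mul_cancel_of_isUnit (hI : IsUnit I) : I⁻¹ * I = 1 := by
  rw [mul_comm, mul_inv_cancel_of_isUnit hI]

theorem isUnit_inv_of_isUnit (hI : IsUnit I) : IsUnit I⁻¹ :=
  IsUnit.of_mul_eq_one _ (inv_mul_cancel_of_isUnit hI)

theorem inv_inv_of_isUnit (hI : IsUnit I) : I⁻¹⁻¹ = I :=
  (right_inverse_eq K _ _ (inv_mul_cancel_of_isUnit hI)).symm

theorem mul_inv_of_isUnit (hU : IsUnit U) (I : FractionalIdeal R⁰ K) :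
    (U * I)⁻¹ = U⁻¹ * I⁻¹ := by
  rcases eq_or_ne I 0 with rfl | hI
  · simp [inv_zero']
  have hUI : U * I ≠ 0 := (hU.mul_right_eq_zero).not.mpr hI
  refine le_antisymm ?_ ?_
  · rw [← hU.mul_le_mul_iff_left, ← mul_assoc U, mul_inv_cancel_of_isUnit hU, one_mul,
      le_inv_iff_mul_le hI, mul_right_comm]
    exact FractionalIdeal.mul_inv_le_one _
  · rw [le_inv_iff_mul_le hUI, mul_mul_mul_comm, inv_mul_cancel_of_isUnit hU, one_mul,
      mul_comm]
    exact FractionalIdeal.mul_inv_le_one I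

theorem mul_inv_self_inv_eq_one (h : IsUnit I⁻¹) : (I * I⁻¹)⁻¹ = 1 := by
  rw [mul_comm I, mul_inv_of_isUnit h, inv_mul_cancel_of_isUnit h]

theorem isUnit_spanSingleton {x : K} (hx : x ≠ 0) : IsUnit (spanSingleton R⁰ x) :=
  IsUnit.of_mul_eq_one _ (spanSingleton_mul_inv K hx)

theorem inf_eq_mul_of_add_inv_eq_one (hU : IsUnit U) (hV : IsUnit V) (hU1 : U ≤ 1) (hV1 : V ≤ 1)
    (h : (U + V)⁻¹ = 1) : U ⊓ V = U * V := by
  refine le_antisymm ?_ (le_inf (mul_le_of_le_one_right' hV1) (mul_le_of_le_one_left' hU1))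
  have hUV : IsUnit (U * V) := hU.mul hV
  have hUV0 : U + V ≠ 0 := ne_bot_of_le_ne_bot hU.ne_zero le_self_add
  have key : (U ⊓ V) * (U + V) ≤ U * V := by
    rw [mul_add]
    exact FractionalIdeal.add_le ((mul_le_mul_left inf_le_right U).trans_eq (mul_comm V U))
      (mul_le_mul_left inf_le_left V)
  rw [← (isUnit_inv_of_isUnit hUV).mul_le_mul_iff_left, inv_mul_cancel_of_isUnit hUV, ← h,
    le_inv_iff_mul_le hUV0, mul_assoc]
  calc (U * V)⁻¹ * ((U ⊓ V) * (U + V)) ≤ (U * V)⁻¹ * (U * V) := by gcongr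
    _ = 1 := inv_mul_cancel_of_isUnit hUV

theorem le_add_of_mul_le_add_mul_self (hU : IsUnit U) (hV : IsUnit V) (hU1 : U ≤ 1)
    (hV1 : V ≤ 1) (h : (U + V)⁻¹ = 1) (hW1 : W ≤ 1) (hW : W * V ≤ U + V * V) : W ≤ U + V := by
  have hUV : U * V⁻¹ ⊓ 1 ≤ U := by
    rw [← hV.mul_le_mul_iff_left, mul_comm V U, ← inf_eq_mul_of_add_inv_eq_one hU hV hU1 hV1 h]
    refine le_inf ?_ (mul_le_of_le_one_right' inf_le_right)
    calc V * (U * V⁻¹ ⊓ 1) ≤ V * (U * V⁻¹) := by gcongr; exact inf_le_left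
      _ = U := by rw [mul_left_comm, mul_inv_cancel_of_isUnit hV, mul_one]
  have hWV : W ≤ U * V⁻¹ + V :=
    calc W = W * V * V⁻¹ := by rw [mul_assoc, mul_inv_cancel_of_isUnit hV, mul_one]
      _ ≤ (U + V * V) * V⁻¹ := by gcongr
      _ = U * V⁻¹ + V := by rw [add_mul, mul_assoc, mul_inv_cancel_of_isUnit hV, mul_one]
  calc W ≤ (V + U * V⁻¹) ⊓ 1 := le_inf (hWV.trans_eq (add_comm _ _)) hW1
    _ = V + U * V⁻¹ ⊓ 1 := add_inf_assoc_of_le _ hV1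
    _ ≤ V + U := by gcongr
    _ = U + V := add_comm V U

end FractionalIdeal

namespace IsSharpDomain

open FractionalIdeal

theorem exists_eq_mul {R K : Type*} [CommRing R] [Field K] [Algebra R K] [IsFractionRing R K]
    (h : IsSharpDomain R) {I A B : FractionalIdeal R⁰ K}
    (hI1 : I ≤ 1) (hA1 : A ≤ 1) (hB1 : B ≤ 1) (hI0 : I ≠ 0) (hA0 : A ≠ 0) (hB0 : B ≠ 0)
    (hAB : A * B ≤ I) : ∃ A' B', A ≤ A' ∧ B ≤ B' ∧ A' ≤ 1 ∧ B' ≤ 1 ∧ I = A' * B' := by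
  obtain ⟨I, rfl⟩ := le_one_iff_exists_coeIdeal.mp hI1
  obtain ⟨A, rfl⟩ := le_one_iff_exists_coeIdeal.mp hA1
  obtain ⟨B, rfl⟩ := le_one_iff_exists_coeIdeal.mp hB1
  rw [coeIdeal_ne_zero] at hI0 hA0 hB0
  rw [← coeIdeal_mul, coeIdeal_le_coeIdeal] at hAB
  obtain ⟨A', B', hA, hB, rfl⟩ := h I A B hI0 hA0 hB0 hAB
  exact ⟨A', B', (coeIdeal_le_coeIdeal K).mpr hA, (coeIdeal_le_coeIdeal K).mpr hB,
    coeIdeal_le_one, coeIdeal_le_one, coeIdeal_mul A' B'⟩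

variable {R K : Type*} [CommRing R] [IsDomain R] [Field K] [Algebra R K] [IsFractionRing R K]
  {I U V : FractionalIdeal R⁰ K}

theorem isUnit_inv (h : IsSharpDomain R) (hI1 : I ≤ 1) (hI0 : I ≠ 0) : IsUnit I⁻¹ := by
  obtain ⟨a, haI, ha0⟩ := Submodule.exists_mem_ne_zero_of_ne_bot
    (coeToSubmodule_ne_bot.mpr hI0)
  set A := spanSingleton R⁰ a
  have hA : IsUnit A := isUnit_spanSingleton ha0
  have hAI : A ≤ I := spanSingleton_le_iff_mem.mpr haI
  have hB1 : A * I⁻¹ ≤ 1 := (mul_le_mul_left hAI _).trans (FractionalIdeal.mul_inv_le_one I)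
  have hB0 : A * I⁻¹ ≠ 0 := hA.mul_right_eq_zero.not.mpr (FractionalIdeal.inv_ne_zero hI0)
  have hIB : I * (A * I⁻¹) ≤ A := by
    rw [mul_left_comm]; exact mul_le_of_le_one_right' (FractionalIdeal.mul_inv_le_one I)
  obtain ⟨A', B', hIA', hBB', -, -, hA'B'⟩ :=
    h.exists_eq_mul (hAI.trans hI1) hI1 hB1 hA.ne_zero hI0 hB0 hIB
  have hA'0 : A' ≠ 0 := ne_bot_of_le_ne_bot hI0 hIA'
  have hB' : B' = A * I⁻¹ := by
    refine le_antisymm ?_ hBB'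
    calc B' = A * (A⁻¹ * B') := by rw [← mul_assoc, mul_inv_cancel_of_isUnit hA, one_mul]
      _ ≤ A * A'⁻¹ := by
        gcongr
        rw [le_inv_iff_mul_le hA'0, mul_assoc, mul_comm B', ← hA'B', inv_mul_cancel_of_isUnit hA]
      _ ≤ A * I⁻¹ := by gcongr; exact inv_anti_mono hI0 hA'0 hIA'
  refine IsUnit.of_mul_eq_one A' (hA.mul_left_cancel ?_)
  calc A * (I⁻¹ * A') = A' * (A * I⁻¹) := by ring
    _ = A * 1 := by rw [← hB', ← hA'B', mul_one]

theorem le_add_mul_add_of_add_inv_eq_one (h : IsSharpDomain R) (hU : IsUnit U) (hV : IsUnit V)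
    (hU1 : U ≤ 1) (hV1 : V ≤ 1) (huv : (U + V)⁻¹ = 1) : U ≤ (U + V) * (U + V) := by
  have hI0 : U + V * V ≠ 0 := ne_bot_of_le_ne_bot hU.ne_zero le_self_add
  have hE0 : U + V ≠ 0 := ne_bot_of_le_ne_bot hU.ne_zero le_self_add
  have hEV : (U + V) * V ≤ U + V * V := by
    rw [add_mul]; gcongr; exact mul_le_of_le_one_right' hV1
  obtain ⟨A', B', hEA', hVB', hA'1, hB'1, hI⟩ :=
    h.exists_eq_mul (FractionalIdeal.add_le hU1 (mul_le_one' hV1 hV1))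
      (FractionalIdeal.add_le hU1 hV1) hV1 hI0 hE0 hV.ne_zero hEV
  have hA' : A' ≤ U + V :=
    le_add_of_mul_le_add_mul_self hU hV hU1 hV1 huv hA'1 (by rw [hI]; gcongr)
  have hB' : B' ≤ U + V :=
    le_add_of_mul_le_add_mul_self hU hV hU1 hV1 huv hB'1
      (by rw [hI, mul_comm A']; gcongr; exact le_add_self.trans hEA')
  calc U ≤ U + V * V := le_self_add
    _ = A' * B' := hI
    _ ≤ (U + V) * (U + V) := by gcongr

theorem add_eq_one_of_add_inv_eq_one (h : IsSharpDomain R) (hU : IsUnit U) (hV : IsUnit V)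
    (hU1 : U ≤ 1) (hV1 : V ≤ 1) (huv : (U + V)⁻¹ = 1) : U + V = 1 := by
  have hsq : U + V ≤ (U + V) * (U + V) := by
    refine FractionalIdeal.add_le (h.le_add_mul_add_of_add_inv_eq_one hU hV hU1 hV1 huv) ?_
    rw [add_comm U V] at huv ⊢
    exact h.le_add_mul_add_of_add_inv_eq_one hV hU hV1 hU1 huv
  obtain ⟨U, rfl⟩ := le_one_iff_exists_coeIdeal.mp hU1
  obtain ⟨V, rfl⟩ := le_one_iff_exists_coeIdeal.mp hV1
  have hfg : (U ⊔ V).FG := Submodule.FG.sup (U.fg_of_isUnit (IsFractionRing.injective R K) hU)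
    (V.fg_of_isUnit (IsFractionRing.injective R K) hV)
  have hidem : IsIdempotentElem (U ⊔ V) := by
    refine le_antisymm Ideal.mul_le_left ?_
    rwa [← coeIdeal_le_coeIdeal K, coeIdeal_mul, coeIdeal_sup]
  rw [← coeIdeal_sup]
  rcases (Ideal.isIdempotentElem_iff_eq_bot_or_top _ hfg).mp hidem with hbot | htop
  · refine absurd ?_ hU.ne_zero
    rw [coeIdeal_eq_zero, ← le_bot_iff, ← hbot]
    exact le_sup_left
  · rw [htop, coeIdeal_top]

theorem isUnit_add (h : IsSharpDomain R) (hU : IsUnit U) (hV : IsUnit V) (hU1 : U ≤ 1)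
    (hV1 : V ≤ 1) : IsUnit (U + V) := by
  have hE1 : U + V ≤ 1 := FractionalIdeal.add_le hU1 hV1
  have hE0 : U + V ≠ 0 := ne_bot_of_le_ne_bot hU.ne_zero le_self_add
  have hW := h.isUnit_inv hE1 hE0
  have hle : ∀ X ≤ U + V, X * (U + V)⁻¹ ≤ 1 := fun X hX =>
    (mul_le_mul_left hX _).trans (FractionalIdeal.mul_inv_le_one _)
  rw [← mul_inv_cancel_iff_isUnit K, add_mul]
  refine h.add_eq_one_of_add_inv_eq_one (hU.mul hW) (hV.mul hW) (hle U le_self_add)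
    (hle V le_add_self) ?_
  rw [← add_mul]
  exact mul_inv_self_inv_eq_one hW

theorem isUnit_add_spanSingleton (h : IsSharpDomain R) (hU : IsUnit U) (hU1 : U ≤ 1) {x : K}
    (hx : x ∈ (1 : FractionalIdeal R⁰ K)) : IsUnit (U + spanSingleton R⁰ x) := by
  rcases eq_or_ne x 0 with rfl | hx0
  · rwa [spanSingleton_zero, add_zero]
  exact h.isUnit_add hU (isUnit_spanSingleton hx0) hU1 (spanSingleton_le_iff_mem.mpr hx)

theorem exists_isUnit_mul_self_not_le (h : IsSharpDomain R) {J F : FractionalIdeal R⁰ K}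
    (hJ1 : J ≤ 1) (hJ : J ≠ 1) (hJinv : J⁻¹ = 1) (hF : IsUnit F) (hFJ : F ≤ J) :
    ∃ F', IsUnit F' ∧ F ≤ F' ∧ F' ≤ J ∧ ¬F' * F' ≤ F := by
  by_contra! hsq
  have hF1 : F ≤ 1 := hFJ.trans hJ1
  have hJJ : J * J ≤ F := by
    refine mul_le.mpr fun x hx y hy => ?_
    have hF' : IsUnit (F + spanSingleton R⁰ x + spanSingleton R⁰ y) :=
      h.isUnit_add_spanSingleton (h.isUnit_add_spanSingleton hF hF1 (hJ1 hx))
        (FractionalIdeal.add_le hF1 (spanSingleton_le_iff_mem.mpr (hJ1 hx))) (hJ1 hy)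
    refine hsq _ hF' (le_self_add.trans le_self_add) ?_ (mul_mem_mul ?_ ?_)
    · exact FractionalIdeal.add_le (FractionalIdeal.add_le hFJ (spanSingleton_le_iff_mem.mpr hx))
        (spanSingleton_le_iff_mem.mpr hy)
    · exact spanSingleton_le_iff_mem.mp (le_add_self.trans le_self_add)
    · exact spanSingleton_le_iff_mem.mp le_add_self
  have hJ0 : J ≠ 0 := ne_bot_of_le_ne_bot hF.ne_zero hFJ
  have hFJ1 : F⁻¹ * J ≤ 1 := by
    rw [← hJinv, le_inv_iff_mul_le hJ0, mul_assoc]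
    calc F⁻¹ * (J * J) ≤ F⁻¹ * F := by gcongr
      _ = 1 := inv_mul_cancel_of_isUnit hF
  have hFinv : F⁻¹ = 1 :=
    le_antisymm (hJinv ▸ (le_inv_iff_mul_le hJ0).mpr hFJ1)
      (FractionalIdeal.one_le_inv hF1 hF.ne_zero)
  have hF_eq : F = 1 := by rw [← inv_inv_of_isUnit hF, hFinv, inv_one]
  exact hJ (le_antisymm hJ1 (hF_eq ▸ hFJ))

end IsSharpDomain

namespace FractionalIdeal

variable {R K : Type*} [CommRing R] [IsDomain R] [Field K] [Algebra R K] [IsFractionRing R K]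
  (D : ℕ → FractionalIdeal R⁰ K)

noncomputable def chainGap (k : ℕ) : FractionalIdeal R⁰ K := D k * (D (k + 1))⁻¹

noncomputable def chainProd (S : Set ℕ) (m : ℕ) : FractionalIdeal R⁰ K :=
  ∏ i ∈ Finset.range m, S.mulIndicator (chainGap D) i

/-- The infinite product `∏_{i ∈ S} D i * (D (i + 1))⁻¹`, as the intersection of its partial
products. -/
noncomputable def chainInfProd (S : Set ℕ) : FractionalIdeal R⁰ K :=
  ⟨⨅ m, (chainProd D S m : Submodule R K),
    isFractional_of_le (J := 1) ((iInf_le _ 0).trans (by simp [chainProd]))⟩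

variable {D}

theorem chainGap_le_one (hmono : Monotone D) (k : ℕ) : chainGap D k ≤ 1 :=
  (mul_le_mul_left (hmono k.le_succ) _).trans (FractionalIdeal.mul_inv_le_one _)

theorem prod_Ico_chainGap (hD : ∀ k, IsUnit (D k)) {k m : ℕ} (hkm : k ≤ m) :
    ∏ i ∈ Finset.Ico k m, chainGap D i = D k * (D m)⁻¹ := by
  induction m, hkm using Nat.le_induction with
  | base => rw [Finset.Ico_self, Finset.prod_empty, mul_inv_cancel_of_isUnit (hD k)]
  | succ m hkm ih =>
    rw [Finset.prod_Ico_succ_top hkm, ih, chainGap, mul_assoc, ← mul_assoc (D m)⁻¹,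
      inv_mul_cancel_of_isUnit (hD m), one_mul]

theorem le_prod_Ico_mulIndicator_chainGap (hD : ∀ k, IsUnit (D k)) (hD1 : ∀ k, D k ≤ 1)
    (hmono : Monotone D) (S : Set ℕ) {k m : ℕ} (hkm : k ≤ m) :
    D k ≤ ∏ i ∈ Finset.Ico k m, S.mulIndicator (chainGap D) i :=
  calc D k ≤ D k * (D m)⁻¹ :=
        le_mul_of_one_le_right' (FractionalIdeal.one_le_inv (hD1 m) (hD m).ne_zero)
    _ = ∏ i ∈ Finset.Ico k m, chainGap D i := (prod_Ico_chainGap hD hkm).symm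
    _ ≤ ∏ i ∈ Finset.Ico k m, S.mulIndicator (chainGap D) i :=
        Finset.prod_le_prod' fun i _ =>
          Set.le_mulIndicator_apply (fun _ => le_rfl) (fun _ => chainGap_le_one hmono i)

theorem isUnit_chainProd (hD : ∀ k, IsUnit (D k)) (S : Set ℕ) (m : ℕ) :
    IsUnit (chainProd D S m) := by
  refine IsUnit.prod_iff.mpr fun i _ => ?_
  by_cases hi : i ∈ S
  · rw [Set.mulIndicator_of_mem hi]
    exact (hD i).mul (isUnit_inv_of_isUnit (hD (i + 1)))
  · rw [Set.mulIndicator_of_notMem hi]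
    exact isUnit_one

theorem chainProd_antitone (hmono : Monotone D) (S : Set ℕ) : Antitone (chainProd D S) := by
  intro m m' hmm'
  rw [chainProd, chainProd, ← Finset.prod_range_mul_prod_Ico _ hmm']
  exact mul_le_of_le_one_right' (Finset.prod_le_one' fun i _ =>
    Set.mulIndicator_le_one (fun i _ => chainGap_le_one hmono i) i)

theorem chainProd_congr {S S' : Set ℕ} {k : ℕ} (h : ∀ i < k, i ∈ S ↔ i ∈ S') :
    chainProd D S k = chainProd D S' k :=
  Finset.prod_congr rfl fun i hi => by
    classical
    simp only [Set.mulIndicator_apply, h i (Finset.mem_range.mp hi)]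

theorem chainInfProd_le (S : Set ℕ) (m : ℕ) : chainInfProd D S ≤ chainProd D S m := by
  rw [← coe_le_coe]
  exact iInf_le _ m

theorem le_chainInfProd {S : Set ℕ} {I : FractionalIdeal R⁰ K} (h : ∀ m, I ≤ chainProd D S m) :
    I ≤ chainInfProd D S := by
  rw [← coe_le_coe]
  exact le_iInf fun m => coe_le_coe.mpr (h m)

theorem chainInfProd_le_one (S : Set ℕ) : chainInfProd D S ≤ 1 :=
  (chainInfProd_le S 0).trans_eq (by simp [chainProd])

theorem chainInfProd_ne_zero (hD : ∀ k, IsUnit (D k)) (hD1 : ∀ k, D k ≤ 1)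
    (hmono : Monotone D) (S : Set ℕ) : chainInfProd D S ≠ 0 := by
  refine ne_bot_of_le_ne_bot (hD 0).ne_zero (le_chainInfProd fun m => ?_)
  rw [chainProd, Finset.range_eq_Ico]
  exact le_prod_Ico_mulIndicator_chainGap hD hD1 hmono S m.zero_le

theorem inv_inv_chainInfProd (hD : ∀ k, IsUnit (D k)) (hD1 : ∀ k, D k ≤ 1)
    (hmono : Monotone D) (S : Set ℕ) : (chainInfProd D S)⁻¹⁻¹ = chainInfProd D S := by
  have hX0 := chainInfProd_ne_zero hD hD1 hmono S
  refine le_antisymm (le_chainInfProd fun m => ?_) (le_inv_inv hX0)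
  have hP := isUnit_chainProd hD S m
  rw [← inv_inv_of_isUnit hP]
  exact inv_anti_mono (FractionalIdeal.inv_ne_zero hP.ne_zero)
    (FractionalIdeal.inv_ne_zero hX0) (inv_anti_mono hX0 hP.ne_zero (chainInfProd_le S m))

theorem chainInfProd_le_of_mem {S : Set ℕ} {k : ℕ} (hk : k ∈ S) :
    chainInfProd D S ≤ chainProd D S k * chainGap D k :=
  (chainInfProd_le S (k + 1)).trans_eq
    (by rw [chainProd, Finset.prod_range_succ, Set.mulIndicator_of_mem hk, chainProd])

theorem chainProd_mul_le_chainInfProd (hD : ∀ k, IsUnit (D k)) (hD1 : ∀ k, D k ≤ 1)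
    (hmono : Monotone D) {S : Set ℕ} {k : ℕ} (hk : k ∉ S) :
    chainProd D S k * D (k + 1) ≤ chainInfProd D S := by
  refine le_chainInfProd fun m => ?_
  have hm : k + 1 ≤ max m (k + 1) := le_max_right _ _
  calc chainProd D S k * D (k + 1) = chainProd D S (k + 1) * D (k + 1) := by
        rw [chainProd, chainProd, Finset.prod_range_succ, Set.mulIndicator_of_notMem hk, mul_one]
    _ ≤ chainProd D S (k + 1) *
          ∏ i ∈ Finset.Ico (k + 1) (max m (k + 1)), S.mulIndicator (chainGap D) i := by
        gcongr
        exact le_prod_Ico_mulIndicator_chainGap hD hD1 hmono S hm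
    _ = chainProd D S (max m (k + 1)) := Finset.prod_range_mul_prod_Ico _ hm
    _ ≤ chainProd D S m := chainProd_antitone hmono S (le_max_left _ _)

theorem chainInfProd_ne_of_mem_of_notMem (hD : ∀ k, IsUnit (D k)) (hD1 : ∀ k, D k ≤ 1)
    (hmono : Monotone D) (hD2 : ∀ k, ¬D (k + 1) * D (k + 1) ≤ D k) {S S' : Set ℕ} {k : ℕ}
    (hkS : k ∈ S) (hkS' : k ∉ S') (h : ∀ i < k, i ∈ S ↔ i ∈ S') :
    chainInfProd D S ≠ chainInfProd D S' := by
  intro hSS'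
  have hle : chainProd D S k * D (k + 1) ≤ chainProd D S k * chainGap D k :=
    calc chainProd D S k * D (k + 1) = chainProd D S' k * D (k + 1) := by
          rw [chainProd_congr h]
      _ ≤ chainInfProd D S' := chainProd_mul_le_chainInfProd hD hD1 hmono hkS'
      _ = chainInfProd D S := hSS'.symm
      _ ≤ chainProd D S k * chainGap D k := chainInfProd_le_of_mem hkS
  rw [(isUnit_chainProd hD S k).mul_le_mul_iff_left] at hle
  refine hD2 k ?_
  calc D (k + 1) * D (k + 1) ≤ chainGap D k * D (k + 1) := mul_le_mul_left hle _
    _ = D k := by rw [chainGap, mul_assoc, inv_mul_cancel_of_isUnit (hD _), mul_one]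

theorem chainInfProd_injective (hD : ∀ k, IsUnit (D k)) (hD1 : ∀ k, D k ≤ 1)
    (hmono : Monotone D) (hD2 : ∀ k, ¬D (k + 1) * D (k + 1) ≤ D k) :
    Function.Injective (chainInfProd D) := by
  classical
  intro S S' hSS'
  by_contra hne
  have hex : ∃ k, ¬(k ∈ S ↔ k ∈ S') := by
    by_contra! h
    exact hne (Set.ext h)
  have h : ∀ i < Nat.find hex, i ∈ S ↔ i ∈ S' := fun i hi => not_not.mp (Nat.find_min hex hi)
  by_cases hk : Nat.find hex ∈ S
  · exact chainInfProd_ne_of_mem_of_notMem hD hD1 hmono hD2 hk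
      (fun hk' => Nat.find_spec hex (iff_of_true hk hk')) h hSS'
  · exact chainInfProd_ne_of_mem_of_notMem hD hD1 hmono hD2
      (not_not.mp fun hk' => Nat.find_spec hex (iff_of_false hk hk')) hk
      (fun i hi => (h i hi).symm) hSS'.symm

end FractionalIdeal

namespace IsSharpDomain

open FractionalIdeal

variable {R K : Type*} [CommRing R] [IsDomain R] [Field K] [Algebra R K] [IsFractionRing R K]

theorem exists_mul_self_le_of_countable [Countable R] (h : IsSharpDomain R)
    {D : ℕ → FractionalIdeal R⁰ K} (hD : ∀ k, IsUnit (D k)) (hD1 : ∀ k, D k ≤ 1)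
    (hmono : Monotone D) : ∃ k, D (k + 1) * D (k + 1) ≤ D k := by
  by_contra! hD2
  have hfg (S : Set ℕ) : (chainInfProd D S : Submodule R K).FG := by
    refine fg_of_isUnit _ ?_
    rw [← inv_inv_chainInfProd hD hD1 hmono S]
    exact isUnit_inv_of_isUnit
      (h.isUnit_inv (chainInfProd_le_one S) (chainInfProd_ne_zero hD hD1 hmono S))
  have : Countable K := IsLocalization.countable R⁰
  have := (Submodule.countable_setOf_fg R K).to_subtype
  have : Countable (Set ℕ) := by
    refine Function.Injective.countable
      (f := fun S => (⟨_, hfg S⟩ : {p : Submodule R K | p.FG})) fun S S' hSS' => ?_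
    have hSS'' := congrArg Subtype.val hSS'
    exact chainInfProd_injective hD hD1 hmono hD2 (coeToSubmodule_injective hSS'')
  obtain ⟨f, hf⟩ := Countable.exists_injective_nat (Set ℕ)
  exact Function.cantor_injective f hf

theorem eq_one_of_inv_eq_one [Countable R] (h : IsSharpDomain R) {J : FractionalIdeal R⁰ K}
    (hJ1 : J ≤ 1) (hJinv : J⁻¹ = 1) : J = 1 := by
  by_contra hJ
  have hJ0 : J ≠ 0 := by
    rintro rfl
    exact zero_ne_one (inv_zero' (R₁ := R) (K := K) ▸ hJinv)
  obtain ⟨x, hxJ, hx0⟩ := Submodule.exists_mem_ne_zero_of_ne_bot (coeToSubmodule_ne_bot.mpr hJ0)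
  have hnext (F : {F : FractionalIdeal R⁰ K // IsUnit F ∧ F ≤ J}) :
      ∃ F' : {F : FractionalIdeal R⁰ K // IsUnit F ∧ F ≤ J}, F.1 ≤ F'.1 ∧ ¬F'.1 * F'.1 ≤ F.1 := by
    obtain ⟨F', hF', hFF', hF'J, hsq⟩ := h.exists_isUnit_mul_self_not_le hJ1 hJ hJinv F.2.1 F.2.2
    exact ⟨⟨F', hF', hF'J⟩, hFF', hsq⟩
  choose next hle hsq using hnext
  let D (k : ℕ) := next^[k]
    ⟨spanSingleton R⁰ x, isUnit_spanSingleton hx0, spanSingleton_le_iff_mem.mpr hxJ⟩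
  have hsucc (k : ℕ) : D (k + 1) = next (D k) := Function.iterate_succ_apply' next k _
  obtain ⟨k, hk⟩ := h.exists_mul_self_le_of_countable (D := fun k => (D k).1)
    (fun k => (D k).2.1) (fun k => (D k).2.2.trans hJ1)
    (monotone_nat_of_le_succ fun k => hsucc k ▸ hle (D k))
  exact hsq (D k) (hsucc k ▸ hk)

theorem isUnit_coeIdeal [Countable R] (h : IsSharpDomain R) {I : Ideal R} (hI : I ≠ ⊥) :
    IsUnit (I : FractionalIdeal R⁰ K) := by
  rw [← mul_inv_cancel_iff_isUnit K]
  exact h.eq_one_of_inv_eq_one (FractionalIdeal.mul_inv_le_one _)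
    (mul_inv_self_inv_eq_one (h.isUnit_inv coeIdeal_le_one (coeIdeal_ne_zero.mpr hI)))

end IsSharpDomain

open FractionalIdeal in
theorem isDedekindDomain_of_isUnit_coeIdeal {R K : Type*} [CommRing R] [IsDomain R] [Field K]
    [Algebra R K] [IsFractionRing R K]
    (h : ∀ I : Ideal R, I ≠ ⊥ → IsUnit (I : FractionalIdeal R⁰ K)) : IsDedekindDomain R := by
  refine (isDedekindDomain_iff_mul_inv_cancel (K := K)).mpr fun I hI => ?_
  obtain ⟨a, J, ha, rfl⟩ := exists_eq_spanSingleton_mul I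
  have hJ : J ≠ ⊥ := by
    rintro rfl
    simp at hI
  rw [mul_inv_cancel_iff_isUnit]
  exact (isUnit_spanSingleton (inv_ne_zero (IsFractionRing.to_map_ne_zero_of_mem_nonZeroDivisors
    (mem_nonZeroDivisors_of_ne_zero ha)))).mul (h J hJ)

theorem countable_sharp_dedekind (R : Type*) [CommRing R] [IsDomain R]
    [Countable R] (h : IsSharpDomain R) : IsDedekindDomain R :=
  isDedekindDomain_of_isUnit_coeIdeal (K := FractionRing R) fun _ hI => h.isUnit_coeIdeal hI
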